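/- arXiv:0806.3941 — 2 statements merged into one kernel-verified Lean document; each statement's English description precedes it below -/
import Mathlib

section
/- The number of n-restricted q-set partitions of {1,...,r}, i.e., |P_{n×r}(q)|, equals d_{n,r}(q) = Σ_{l=1}^{n} S(r,l)·[n][n-1]···[n-l+1], where q is a prime power. -/
open Finset

/-- Stirling numbers of the second kind: `stirling r l` counts set partitions of an
`r`-element set into `l` nonempty blocks. -/
def stirling : ℕ → ℕ → ℕ
  | 0, 0 => 1
  | 0, _ + 1 => 0
  | _ + 1, 0 => 0
  | r + 1, l + 1 => (l + 1) * stirling r (l + 1) + stirling r l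

/-- The `r`-th Bell number. -/
def bell (r : ℕ) : ℕ := ∑ l ∈ Finset.range (r + 1), stirling r l

/-- The q-integer `[i] = 1 + q + ... + q^(i-1)`. -/
def qint {R : Type*} [Semiring R] (q : R) (i : ℕ) : R := ∑ j ∈ Finset.range i, q ^ j

/-- The polynomial `d_{n,r}(q) = Σ_{l=1}^n S(r,l)·[n][n-1]···[n-l+1]`. -/
def dnr {R : Type*} [CommSemiring R] (n r : ℕ) (q : R) : R :=
  ∑ l ∈ Finset.Icc 1 n, (stirling r l : R) * ∏ j ∈ Finset.range l, qint q (n - j)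

/-- The one-line notation of the permutation `w_a`: start with the word `(1,2,...,n)` and,
for each letter of `a` in turn, move it to the rightmost position.  This produces the
rightmost occurrences of each value in the word `(1,...,n,a_1,...,a_r)`. -/
def waList (n : ℕ) (a : List ℕ) : List ℕ :=
  a.foldl (fun l x => l.erase x ++ [x]) (List.range' 1 n)

/-- The word associated with a sequence `a ∈ {1,...,n}^r` (values shifted to `1,...,n`). -/
def waWord {n r : ℕ} (a : Fin r → Fin n) : List ℕ := List.ofFn fun i => (a i : ℕ) + 1

/-- The inverse major index of a one-line word `l` with values `1,...,n`:
the sum of all `i` such that `i+1` occurs to the left of `i` (the backsteps). -/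
def imajList (n : ℕ) (l : List ℕ) : ℕ :=
  ∑ i ∈ Finset.Icc 1 (n - 1), if l.idxOf (i + 1) < l.idxOf i then i else 0

/-- The number of inversions of a permutation. -/
def invPerm {n : ℕ} (w : Equiv.Perm (Fin n)) : ℕ :=
  ((Finset.univ : Finset (Fin n × Fin n)).filter fun p => p.1 < p.2 ∧ w p.2 < w p.1).card

/-- The descent set of the one-line notation of `w` (zero-based positions). -/
def desSet {n : ℕ} (w : Equiv.Perm (Fin n)) : Finset ℕ :=
  (Finset.range (n - 1)).filter fun i =>
    ∃ h : i + 1 < n, w ⟨i + 1, h⟩ < w ⟨i, Nat.lt_of_succ_lt h⟩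

/-- The backstep set of `w` (zero-based values): `i` such that the value `i+1` appears to
the left of the value `i` in one-line notation, i.e. its position `w⁻¹ (i+1)` is smaller. -/
def bsSet {n : ℕ} (w : Equiv.Perm (Fin n)) : Finset ℕ :=
  (Finset.range (n - 1)).filter fun i =>
    ∃ h : i + 1 < n, w.symm ⟨i + 1, h⟩ < w.symm ⟨i, Nat.lt_of_succ_lt h⟩

/-- The set partition (as a finset of blocks) underlying a sequence `m`: `i ~ j` iff `m i = m j`. -/
def shapeFn {r : ℕ} {α : Type*} [DecidableEq α] (m : Fin r → α) : Finset (Finset (Fin r)) :=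
  (Finset.univ.image m).image fun v => Finset.univ.filter fun i => m i = v

/-- `K` is a set partition of `{1,...,r}`: blocks are nonempty and every element lies in a
unique block. -/
def isSetPartition {r : ℕ} (K : Finset (Finset (Fin r))) : Prop :=
  (∀ B ∈ K, B.Nonempty) ∧ ∀ i : Fin r, ∃! B, B ∈ K ∧ i ∈ B

instance {r : ℕ} : DecidablePred (isSetPartition (r := r)) := fun K => by
  unfold isSetPartition ExistsUnique; infer_instance

/-- Auxiliary computation of the ⋆-height: `m` records `1 + max` of the ⋆-heights so far. -/
def starAux : ℕ → List ℕ → List ℕ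
  | _, [] => []
  | m, k :: ks => min k m :: starAux (max m (min k m + 1)) ks

/-- The ⋆-height `k*` of a sequence `k ∈ Z_n^r`: `k_1* = 0` and
`k_j* = min(k_j, max(k_1*+1, ..., k_{j-1}*+1))`. -/
def starFn {n r : ℕ} (k : Fin r → Fin n) : Fin r → ℕ :=
  fun j => (starAux 0 (List.ofFn fun i => (k i : ℕ))).getD j 0

/-- `k_j - k_j*`, the number of free entries in column `j` of a `q`-set partition. -/
def qSetDiff {n r : ℕ} (k : Fin r → Fin n) (j : Fin r) : ℕ := (k j : ℕ) - starFn k j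

/-- The root subgroup element `x_{ij}(a)`: identity matrix plus `a` in position `(i,j)`. -/
def xelt {F : Type*} [Field F] {n : ℕ} (i j : Fin n) (a : F) : Matrix (Fin n) (Fin n) F :=
  1 + Matrix.single i j a

/-- The permutation matrix of `w`, with entry `1` in positions `(w l, l)`. -/
def permMat {F : Type*} [Field F] {n : ℕ} (w : Equiv.Perm (Fin n)) : Matrix (Fin n) (Fin n) F :=
  Matrix.of fun k l => if k = w l then 1 else 0

/-! Read from left to right, `k*` is a restricted growth word: if `m` blocks are open, an entry
`k_j < m` joins block `k_j` and contributes `q^0`, while an entry `k_j ≥ m` opens block `m` and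
contributes `q^(k_j - m)`, which summed over `k_j ∈ [m, n)` gives `[n - m]`. Hence appending an
entry to `k` acts on a weight `f` of the number of blocks by `f m ↦ m f m + [n - m] f (m + 1)`,
and the Stirling recurrence `S(r+1, l) = l S(r, l) + S(r, l-1)` yields
`∑_k q^(∑_j (k_j - k_j*)) f(#blocks) = ∑_l S(r, l) [n][n-1]⋯[n-l+1] f l`. -/

section StarHeight

/-- The running bound `max(k_1*+1, ..., k_j*+1)` of `starAux`. -/
def starLevel (m : ℕ) (l : List ℕ) : ℕ := l.foldl (fun m k => max m (min k m + 1)) m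

theorem length_starAux (m : ℕ) (l : List ℕ) : (starAux m l).length = l.length := by
  induction l generalizing m with
  | nil => rfl
  | cons k l ih => simp [starAux, ih]

theorem starAux_append (m : ℕ) (l₁ l₂ : List ℕ) :
    starAux m (l₁ ++ l₂) = starAux m l₁ ++ starAux (starLevel m l₁) l₂ := by
  induction l₁ generalizing m with
  | nil => rfl
  | cons k l ih => simp [starAux, starLevel, ih]

variable {n r : ℕ}

def blockCount (k : Fin r → Fin n) : ℕ := starLevel 0 (List.ofFn fun i => (k i : ℕ))

theorem ofFn_snoc_val (k : Fin r → Fin n) (x : Fin n) :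
    (List.ofFn fun i => ((Fin.snoc k x : Fin (r + 1) → Fin n) i : ℕ)) =
      (List.ofFn fun i => (k i : ℕ)) ++ [(x : ℕ)] := by
  rw [List.ofFn_succ']
  simp

theorem blockCount_snoc (k : Fin r → Fin n) (x : Fin n) :
    blockCount (Fin.snoc k x : Fin (r + 1) → Fin n) =
      max (blockCount k) (min (x : ℕ) (blockCount k) + 1) := by
  rw [blockCount, ofFn_snoc_val, starLevel, List.foldl_append]
  rfl

theorem starFn_snoc_castSucc (k : Fin r → Fin n) (x : Fin n) (i : Fin r) :
    starFn (Fin.snoc k x : Fin (r + 1) → Fin n) i.castSucc = starFn k i := by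
  simp only [starFn, ofFn_snoc_val, starAux_append, Fin.val_castSucc]
  rw [List.getD_append _ _ _ _ (by simp [length_starAux])]

theorem starFn_snoc_last (k : Fin r → Fin n) (x : Fin n) :
    starFn (Fin.snoc k x : Fin (r + 1) → Fin n) (Fin.last r) = min (x : ℕ) (blockCount k) := by
  simp only [starFn, ofFn_snoc_val, starAux_append, Fin.val_last]
  rw [List.getD_append_right _ _ _ _ (by simp [length_starAux])]
  simp [length_starAux, starAux, blockCount]

theorem sum_qSetDiff_snoc (k : Fin r → Fin n) (x : Fin n) :
    ∑ j, qSetDiff (Fin.snoc k x : Fin (r + 1) → Fin n) j =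
      ∑ j, qSetDiff k j + (x - min (x : ℕ) (blockCount k)) := by
  simp [Fin.sum_univ_castSucc, qSetDiff, starFn_snoc_castSucc, starFn_snoc_last]

end StarHeight

section QCounting

variable {R : Type*} [CommSemiring R]

theorem sum_range_pow_sub_min_mul (q : R) (f : ℕ → R) (m N : ℕ) :
    ∑ x ∈ range N, q ^ (x - min x m) * f (max m (min x m + 1)) =
      (min m N : ℕ) * f m + qint q (N - m) * f (m + 1) := by
  induction N with
  | zero => simp [qint]
  | succ N ih =>
    rw [sum_range_succ, ih]
    rcases lt_or_ge N m with hN | hN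
    · have hq : N + 1 - m = N - m := by omega
      rw [min_eq_left hN.le, Nat.sub_self, pow_zero, one_mul, max_eq_left hN,
        min_eq_right hN.le, min_eq_right hN, hq]
      push_cast
      ring
    · have hq : N + 1 - m = N - m + 1 := by omega
      rw [min_eq_right hN, max_eq_right (Nat.le_succ m), min_eq_left hN,
        min_eq_left (Nat.le_succ_of_le hN), hq, qint, qint, sum_range_succ]
      ring

/-- The q-analogue `[n][n-1]⋯[n-l+1]` of the falling factorial. -/
def qDescFactorial (q : R) (n l : ℕ) : R := ∏ j ∈ range l, qint q (n - j)

theorem qDescFactorial_succ (q : R) (n l : ℕ) :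
    qDescFactorial q n (l + 1) = qDescFactorial q n l * qint q (n - l) :=
  prod_range_succ _ _

theorem qDescFactorial_eq_zero (q : R) {n l : ℕ} (h : n < l) : qDescFactorial q n l = 0 :=
  prod_eq_zero (mem_range.2 h) (by simp [qint])

theorem min_mul_qDescFactorial (q : R) (n l : ℕ) :
    (min l n : ℕ) * qDescFactorial q n l = l * qDescFactorial q n l := by
  rcases le_or_gt l n with h | h
  · rw [min_eq_left h]
  · rw [qDescFactorial_eq_zero q h, mul_zero, mul_zero]

theorem sum_stirling_succ_mul_qDescFactorial (q : R) (f : ℕ → R) (n r : ℕ) :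
    ∑ l ∈ range (n + 1), (stirling r l : R) * qDescFactorial q n l *
        ((min l n : ℕ) * f l + qint q (n - l) * f (l + 1)) =
      ∑ l ∈ range (n + 1), (stirling (r + 1) l : R) * qDescFactorial q n l * f l := by
  have hsplit : ∀ l, (stirling r l : R) * qDescFactorial q n l *
      ((min l n : ℕ) * f l + qint q (n - l) * f (l + 1)) =
      l * stirling r l * qDescFactorial q n l * f l +
        stirling r l * qDescFactorial q n (l + 1) * f (l + 1) := by
    intro l
    rw [qDescFactorial_succ, mul_add, ← mul_assoc, mul_assoc _ _ ((min l n : ℕ) : R),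
      mul_comm _ ((min l n : ℕ) : R), min_mul_qDescFactorial]
    ring
  rw [sum_congr rfl fun l _ => hsplit l, sum_add_distrib, sum_range_succ',
    sum_range_succ _ n, qDescFactorial_eq_zero q (Nat.lt_succ_self n), sum_range_succ' _ n]
  simp only [stirling, Nat.cast_add, Nat.cast_mul, Nat.cast_zero, zero_mul, mul_zero, add_zero]
  rw [← sum_add_distrib]
  refine sum_congr rfl fun l _ => ?_
  push_cast
  ring

variable {n : ℕ}

theorem sum_pow_sum_qSetDiff_snoc (q : R) (f : ℕ → R) (r : ℕ) :
    ∑ k : Fin (r + 1) → Fin n, q ^ (∑ j, qSetDiff k j) * f (blockCount k) =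
      ∑ k : Fin r → Fin n, q ^ (∑ j, qSetDiff k j) *
        ((min (blockCount k) n : ℕ) * f (blockCount k) +
          qint q (n - blockCount k) * f (blockCount k + 1)) := by
  rw [← (Fin.snocEquiv fun _ => Fin n).sum_comp, Fintype.sum_prod_type_right]
  refine sum_congr rfl fun k _ => ?_
  simp only [Fin.snocEquiv, Equiv.coe_fn_mk, sum_qSetDiff_snoc, blockCount_snoc, pow_add,
    mul_assoc, ← mul_sum]
  rw [Fin.sum_univ_eq_sum_range (fun x => q ^ (x - min x (blockCount k)) *
    f (max (blockCount k) (min x (blockCount k) + 1))), sum_range_pow_sub_min_mul]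

theorem sum_pow_sum_qSetDiff_mul (q : R) (r : ℕ) (f : ℕ → R) :
    ∑ k : Fin r → Fin n, q ^ (∑ j, qSetDiff k j) * f (blockCount k) =
      ∑ l ∈ range (n + 1), (stirling r l : R) * qDescFactorial q n l * f l := by
  induction r generalizing f with
  | zero =>
    rw [sum_range_succ']
    simp [stirling, qDescFactorial, blockCount, starLevel]
  | succ r ih =>
    rw [sum_pow_sum_qSetDiff_snoc]
    exact (ih _).trans (sum_stirling_succ_mul_qDescFactorial q f n r)

theorem sum_pow_sum_qSetDiff (q : R) {r : ℕ} (hr : 0 < r) :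
    ∑ k : Fin r → Fin n, q ^ (∑ j, qSetDiff k j) = dnr n r q := by
  have hsum := sum_pow_sum_qSetDiff_mul q r (n := n) fun _ => 1
  simp only [mul_one] at hsum
  rw [hsum, dnr]
  refine (sum_subset (fun l hl => ?_) fun l hl hl' => ?_).symm
  · simp only [mem_Icc, mem_range] at hl ⊢
    omega
  · obtain rfl : l = 0 := by simp_all
    obtain ⟨r, rfl⟩ := Nat.exists_eq_add_one_of_ne_zero hr.ne'
    simp [stirling]

end QCounting

theorem stmt9_general (F : Type*) [Fintype F] (n r : ℕ) (hr : 0 < r) :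
    Fintype.card (Σ k : Fin r → Fin n, ∀ j : Fin r, Fin (qSetDiff k j) → F) =
      ∑ l ∈ Finset.Icc 1 n,
        stirling r l * ∏ j ∈ Finset.range l, qint (Fintype.card F) (n - j) := by
  simp only [Fintype.card_sigma, Fintype.card_pi, prod_const, card_univ, Fintype.card_fin,
    prod_pow_eq_pow_sum]
  exact sum_pow_sum_qSetDiff _ hr

/-- the number of `n`-restricted `q`-set partitions of `{1,...,r}` equals
`d_{n,r}(q) = Σ_{l=1}^n S(r,l)[n][n-1]···[n-l+1]`, where `q = |F|` is a prime power. -/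
theorem stmt9 (F : Type*) [Field F] [Fintype F] (n r : ℕ) (hn : 0 < n) (hr : 0 < r) :
    Fintype.card (Σ k : Fin r → Fin n, ∀ j : Fin r, Fin (qSetDiff k j) → F) =
      ∑ l ∈ Finset.Icc 1 n,
        stirling r l * ∏ j ∈ Finset.range l, qint (Fintype.card F) (n - j) :=
  stmt9_general F n r hr
end

section
/- Given a set partition K of {1,...,r} with l blocks (l ≤ n), the number of n-restricted q-set partitions of {1,...,r} whose underlying *-height sequence corresponds to K equals [n][n-1]···[n-l+1], where q is a prime power. -/
open Finset

/-!
The ⋆-height `k*` of any `k` is a restricted growth sequence: each entry is at most one more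
than the maximum of the earlier ones. Such a sequence is determined by its set partition, and every
set partition `K` has one, `s`. Hence `k*` corresponds to `K` iff `k* = s`, which forces `k_j = s_j`
whenever `j` is not the first element of its block, and only asks `s_j ≤ k_j` when it is. At the
first elements of the `l` blocks, `s_j` runs through `0, ..., l - 1`, and summing `q ^ (k_j - s_j)`
over `k_j ∈ {s_j, ..., n - 1}` gives `[n - s_j]`.
-/

section RestrictedGrowth

variable {α : Type*} [LinearOrder α] [LocallyFiniteOrderBot α]

def heightBound (t : α → ℕ) (j : α) : ℕ := (Iio j).sup fun i => t i + 1

def IsRestrictedGrowth (t : α → ℕ) : Prop := ∀ j, t j ≤ heightBound t j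

lemma heightBound_congr {t t' : α → ℕ} {j : α} (h : ∀ i < j, t i = t' i) :
    heightBound t j = heightBound t' j :=
  Finset.sup_congr rfl fun i hi => by rw [h i (mem_Iio.mp hi)]

lemma lt_heightBound {t : α → ℕ} {i j : α} (hij : i < j) : t i < heightBound t j :=
  Nat.lt_of_succ_le (le_sup (f := fun i => t i + 1) (mem_Iio.mpr hij))

lemma exists_lt_le_of_lt_heightBound {t : α → ℕ} {v : ℕ} {j : α} (h : v < heightBound t j) :
    ∃ i < j, v ≤ t i := by
  obtain ⟨i, hi, hv⟩ := Finset.lt_sup_iff.mp h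
  exact ⟨i, mem_Iio.mp hi, Nat.lt_succ_iff.mp hv⟩

namespace IsRestrictedGrowth

variable [WellFoundedLT α] {t : α → ℕ}

lemma exists_le_eq (ht : IsRestrictedGrowth t) {v : ℕ} {j : α} (hv : v ≤ t j) :
    ∃ i ≤ j, t i = v := by
  induction j using WellFoundedLT.induction generalizing v with
  | _ j ih =>
    rcases hv.eq_or_lt with rfl | hlt
    · exact ⟨j, le_rfl, rfl⟩
    obtain ⟨i, hij, hvi⟩ := exists_lt_le_of_lt_heightBound (hlt.trans_le (ht j))
    obtain ⟨i', hi'i, rfl⟩ := ih i hij hvi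
    exact ⟨i', hi'i.trans hij.le, rfl⟩

lemma eq_heightBound_iff (ht : IsRestrictedGrowth t) {j : α} :
    t j = heightBound t j ↔ ∀ i < j, t i ≠ t j := by
  refine ⟨fun h i hij hi => (lt_heightBound (t := t) hij).ne (hi.trans h), fun hnew => ?_⟩
  refine (ht j).antisymm (not_lt.mp fun hlt => ?_)
  obtain ⟨i, hij, hle⟩ := exists_lt_le_of_lt_heightBound hlt
  obtain ⟨i', hi'i, hi'⟩ := ht.exists_le_eq hle
  exact hnew i' (hi'i.trans_lt hij) hi'

lemma ext_of_kernel {t' : α → ℕ} (ht : IsRestrictedGrowth t) (ht' : IsRestrictedGrowth t')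
    (h : ∀ i j, t i = t j ↔ t' i = t' j) : t = t' := by
  funext j
  induction j using WellFoundedLT.induction with
  | _ j ih =>
    by_cases hnew : ∀ i < j, t i ≠ t j
    · have hnew' : ∀ i < j, t' i ≠ t' j := fun i hij => (h i j).not.mp (hnew i hij)
      rw [ht.eq_heightBound_iff.mpr hnew, ht'.eq_heightBound_iff.mpr hnew', heightBound_congr ih]
    · simp only [not_forall, not_not] at hnew
      obtain ⟨i, hij, hi⟩ := hnew
      rw [← hi, ih i hij, (h i j).mp hi]

lemma injOn_setOf_eq_heightBound (ht : IsRestrictedGrowth t) :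
    Set.InjOn t {j | t j = heightBound t j} := by
  intro i hi j hj hij
  by_contra hne
  rcases lt_or_gt_of_ne hne with hlt | hlt
  · exact (ht.eq_heightBound_iff.mp hj) i hlt hij
  · exact (ht.eq_heightBound_iff.mp hi) j hlt hij.symm

variable [Fintype α]

lemma image_univ_eq_range (ht : IsRestrictedGrowth t) :
    univ.image t = range #(univ.image t) := by
  suffices h : univ.image t = range (univ.sup fun i => t i + 1) by rw [h, card_range]
  ext v
  simp only [mem_image, mem_univ, true_and, mem_range]
  constructor
  · rintro ⟨j, rfl⟩
    exact Nat.lt_of_succ_le (le_sup (f := fun i => t i + 1) (mem_univ j))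
  · intro hv
    obtain ⟨j, -, hvj⟩ := Finset.lt_sup_iff.mp hv
    obtain ⟨i, -, hi⟩ := ht.exists_le_eq (Nat.lt_succ_iff.mp hvj)
    exact ⟨i, hi⟩

lemma image_filter_eq_heightBound (ht : IsRestrictedGrowth t) :
    (univ.filter fun j => t j = heightBound t j).image t = univ.image t := by
  refine (image_subset_image (filter_subset _ _)).antisymm fun v hv => ?_
  obtain ⟨j, -, rfl⟩ := mem_image.mp hv
  set first := (univ.filter fun i => t i = t j).min' ⟨j, by simp⟩
  have hfirst : t first = t j := by
    simpa using min'_mem (univ.filter fun i => t i = t j) ⟨j, by simp⟩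
  refine mem_image.mpr ⟨first, mem_filter.mpr ⟨mem_univ _, ht.eq_heightBound_iff.mpr ?_⟩, hfirst⟩
  intro i hi hti
  exact (min'_le _ i (by simp [hti, hfirst])).not_gt hi

lemma prod_ite_eq_heightBound {M : Type*} [CommMonoid M]
    (ht : IsRestrictedGrowth t) (f : ℕ → M) :
    ∏ j, (if t j = heightBound t j then f (t j) else 1) = ∏ v ∈ range #(univ.image t), f v := by
  have hinj : Set.InjOn t (univ.filter fun j => t j = heightBound t j : Finset α) :=
    fun i hi j hj => ht.injOn_setOf_eq_heightBound (by simpa using hi) (by simpa using hj)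
  rw [← prod_filter, ← prod_image hinj, ht.image_filter_eq_heightBound, ← ht.image_univ_eq_range]

end IsRestrictedGrowth

end RestrictedGrowth

lemma exists_isRestrictedGrowth_forall_eq_iff {α β : Type*} [LinearOrder α]
    [LocallyFiniteOrderBot α] [Fintype α] (g : α → β) :
    ∃ t : α → ℕ, IsRestrictedGrowth t ∧ ∀ i j, t i = t j ↔ g i = g j := by
  classical
  let first : α → α := fun j => (univ.filter fun i => g i = g j).min' ⟨j, by simp⟩
  have g_first (j : α) : g (first j) = g j := by
    simpa using min'_mem (univ.filter fun i => g i = g j) ⟨j, by simp⟩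
  have first_le (j : α) : first j ≤ j := min'_le _ _ (by simp)
  have first_eq_iff (i j : α) : first i = first j ↔ g i = g j :=
    ⟨fun h => by rw [← g_first i, h, g_first], fun h => by simp only [first, h]⟩
  let F := univ.image first
  have first_of_mem {f : α} (hf : f ∈ F) : first f = f := by
    obtain ⟨x, -, rfl⟩ := mem_image.mp hf
    exact (first_eq_iff _ _).mpr (g_first x)
  -- `t j` is the number of first occurrences that precede the first occurrence of `g j`
  let rank : α → ℕ := fun f => #(F.filter (· < f))
  have rank_strictMonoOn {f f' : α} (hf : f ∈ F) (hlt : f < f') : rank f < rank f' := by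
    refine card_lt_card ⟨fun x hx => ?_, fun hsub => ?_⟩
    · simp only [mem_filter] at hx ⊢
      exact ⟨hx.1, hx.2.trans hlt⟩
    exact lt_irrefl f (mem_filter.mp (hsub (mem_filter.mpr ⟨hf, hlt⟩))).2
  refine ⟨fun j => rank (first j), fun j => ?_, fun i j => ?_⟩
  · by_cases hS : (F.filter (· < first j)).Nonempty
    · set p := (F.filter (· < first j)).max' hS
      obtain ⟨hpF, hp⟩ := mem_filter.mp (max'_mem _ hS)
      have hsub : F.filter (· < first j) ⊆ insert p (F.filter (· < p)) := fun x hx => by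
        rcases (le_max' _ x hx).eq_or_lt with h | h
        · exact h ▸ mem_insert_self _ _
        · exact mem_insert_of_mem (mem_filter.mpr ⟨(mem_filter.mp hx).1, h⟩)
      calc rank (first j) ≤ rank (first p) + 1 := by
            rw [first_of_mem hpF]
            exact (card_le_card hsub).trans (card_insert_le _ _)
        _ ≤ heightBound (fun j => rank (first j)) j :=
            lt_heightBound (t := fun j => rank (first j)) (hp.trans_le (first_le j))
    · simp [rank, not_nonempty_iff_eq_empty.mp hS]
  · rw [← first_eq_iff]
    refine ⟨fun h => ?_, fun h => by simp only [h]⟩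
    by_contra hne
    rcases lt_or_gt_of_ne hne with hlt | hlt
    · exact (rank_strictMonoOn (mem_image_of_mem _ (mem_univ i)) hlt).ne h
    · exact (rank_strictMonoOn (mem_image_of_mem _ (mem_univ j)) hlt).ne' h

section Shape

variable {r : ℕ}

lemma mem_shapeFn {β : Type*} [DecidableEq β] {t : Fin r → β} {B : Finset (Fin r)} :
    B ∈ shapeFn t ↔ ∃ j, univ.filter (fun i => t i = t j) = B := by
  simp [shapeFn]

lemma shapeFn_eq_shapeFn_iff {β γ : Type*} [DecidableEq β] [DecidableEq γ] {t : Fin r → β}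
    {t' : Fin r → γ} : shapeFn t = shapeFn t' ↔ ∀ i j, t i = t j ↔ t' i = t' j := by
  constructor
  · intro h i j
    have hj : univ.filter (fun x => t x = t j) ∈ shapeFn t' := h ▸ mem_shapeFn.mpr ⟨j, rfl⟩
    obtain ⟨v, hv⟩ := mem_shapeFn.mp hj
    have hjv : j ∈ univ.filter (fun x => t' x = t' v) := hv ▸ by simp
    simp only [mem_filter, mem_univ, true_and] at hjv
    simpa [hjv] using congrArg (i ∈ ·) hv.symm
  · intro h
    have hfiber (j : Fin r) :
        univ.filter (fun i => t i = t j) = univ.filter (fun i => t' i = t' j) :=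
      filter_congr fun i _ => h i j
    ext B
    simp only [mem_shapeFn, hfiber]

lemma isSetPartition.exists_shapeFn_eq {K : Finset (Finset (Fin r))} (hK : isSetPartition K) :
    ∃ g : Fin r → Finset (Fin r), shapeFn g = K := by
  choose g hg using fun j => (hK.2 j).exists
  have hunique {j : Fin r} {B : Finset (Fin r)} (hB : B ∈ K) (hj : j ∈ B) : g j = B :=
    (hK.2 j).unique (hg j) ⟨hB, hj⟩
  have hfiber (j : Fin r) : univ.filter (fun i => g i = g j) = g j := by
    ext i
    simp only [mem_filter, mem_univ, true_and]
    exact ⟨fun h => h ▸ (hg i).2, fun h => hunique (hg j).1 h⟩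
  refine ⟨g, Finset.ext fun B => ?_⟩
  simp only [mem_shapeFn, hfiber]
  refine ⟨fun ⟨j, hj⟩ => hj ▸ (hg j).1, fun hB => ?_⟩
  obtain ⟨j, hj⟩ := hK.1 B hB
  exact ⟨j, hunique hB hj⟩

lemma isSetPartition.exists_isRestrictedGrowth_shapeFn_eq {K : Finset (Finset (Fin r))}
    (hK : isSetPartition K) : ∃ s : Fin r → ℕ, IsRestrictedGrowth s ∧ shapeFn s = K := by
  classical
  obtain ⟨g, rfl⟩ := hK.exists_shapeFn_eq
  obtain ⟨s, hs, hsg⟩ := exists_isRestrictedGrowth_forall_eq_iff g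
  exact ⟨s, hs, shapeFn_eq_shapeFn_iff.mpr hsg⟩

end Shape

lemma starAux_getD (m : ℕ) (ks : List ℕ) (j : ℕ) :
    (starAux m ks).getD j 0 =
      min (ks.getD j 0) (max m ((range j).sup fun i => (starAux m ks).getD i 0 + 1)) := by
  induction ks generalizing m j with
  | nil => simp [starAux]
  | cons k ks ih =>
    cases j with
    | zero => simp [starAux]
    | succ j =>
      rw [range_add_one', sup_insert, sup_map]
      simp only [starAux, List.getD_cons_succ, List.getD_cons_zero]
      rw [ih, max_assoc]
      rfl

section StarHeight

variable {n r : ℕ}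

lemma Fin.sup_Iio_eq_sup_range {β : Type*} [SemilatticeSup β] [OrderBot β] (f : ℕ → β)
    (j : Fin r) : (Iio j).sup (fun i => f i) = (range j).sup f := by
  rw [← Nat.Iio_eq_range, ← Fin.map_valEmbedding_Iio, sup_map]
  rfl

lemma starFn_eq_min (k : Fin r → Fin n) (j : Fin r) :
    starFn k j = min (k j : ℕ) (heightBound (starFn k) j) := by
  rw [starFn, starAux_getD, heightBound, ← Fin.sup_Iio_eq_sup_range]
  simp [starFn]

lemma isRestrictedGrowth_starFn (k : Fin r → Fin n) : IsRestrictedGrowth (starFn k) :=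
  fun j => (starFn_eq_min k j).trans_le (min_le_right _ _)

lemma starFn_eq_iff (k : Fin r → Fin n) (t : Fin r → ℕ) :
    starFn k = t ↔ ∀ j, t j = min (k j : ℕ) (heightBound t j) := by
  refine ⟨fun h j => h ▸ starFn_eq_min k j, fun h => funext fun j => ?_⟩
  induction j using WellFoundedLT.induction with
  | _ j ih => rw [starFn_eq_min, h, heightBound_congr ih]

end StarHeight

lemma sum_pow_sub_eq_qint {R : Type*} [Semiring R] (q : R) (c n : ℕ) :
    ∑ x ∈ univ.filter (fun x : Fin n => c ≤ (x : ℕ)), q ^ ((x : ℕ) - c) = qint q (n - c) := by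
  rw [sum_filter, Fin.sum_univ_eq_sum_range (fun x => if c ≤ x then q ^ (x - c) else 0),
    ← sum_filter, range_eq_Ico, Ico_filter_le, Nat.zero_max, sum_Ico_eq_sum_range]
  simp [qint]

section Counting

variable {n r : ℕ}

lemma card_shapeFn {β : Type*} [DecidableEq β] (t : Fin r → β) :
    #(shapeFn t) = #(univ.image t) := by
  refine card_image_of_injOn fun v hv w hw hvw => ?_
  obtain ⟨i, -, rfl⟩ := mem_image.mp hv
  simpa using (Finset.ext_iff.mp hvw i).mp (by simp)

lemma shapeFn_starFn_eq_iff {s : Fin r → ℕ} (hs : IsRestrictedGrowth s) (k : Fin r → Fin n) :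
    shapeFn (starFn k) = shapeFn s ↔ starFn k = s :=
  ⟨fun h => (isRestrictedGrowth_starFn k).ext_of_kernel hs (shapeFn_eq_shapeFn_iff.mp h),
    congrArg shapeFn⟩

lemma starFn_eq_iff_mem_piFinset {s : Fin r → ℕ} (hs : IsRestrictedGrowth s) (k : Fin r → Fin n) :
    starFn k = s ↔ k ∈ Fintype.piFinset fun j => univ.filter fun x : Fin n =>
      if s j = heightBound s j then s j ≤ x else (x : ℕ) = s j := by
  simp only [starFn_eq_iff, Fintype.mem_piFinset, mem_filter, mem_univ, true_and]
  refine forall_congr' fun j => ?_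
  split_ifs with h
  · rw [← h]
    omega
  · have := (hs j).lt_of_ne h
    omega

lemma sum_filter_starFn_eq_prod {R : Type*} [CommSemiring R] (q : R) {s : Fin r → ℕ}
    (hs : IsRestrictedGrowth s) (hsn : ∀ j, s j < n) :
    ∑ k ∈ univ.filter (fun k : Fin r → Fin n => starFn k = s), ∏ j, q ^ ((k j : ℕ) - s j) =
      ∏ j, if s j = heightBound s j then qint q (n - s j) else 1 := by
  rw [filter_congr fun k _ => starFn_eq_iff_mem_piFinset hs k, filter_mem_eq_inter, univ_inter,
    ← prod_univ_sum _ fun j (x : Fin n) => q ^ ((x : ℕ) - s j)]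
  refine prod_congr rfl fun j _ => ?_
  split_ifs
  · exact sum_pow_sub_eq_qint q (s j) n
  · have hsingleton : univ.filter (fun x : Fin n => (x : ℕ) = s j) = {⟨s j, hsn j⟩} := by
      ext x
      simp [Fin.ext_iff]
    simp [hsingleton]

lemma card_qSetPartitions_shapeFn_eq (F : Type*) [Fintype F] {s : Fin r → ℕ}
    (hs : IsRestrictedGrowth s) :
    Fintype.card (Σ k : {k : Fin r → Fin n // shapeFn (starFn k) = shapeFn s},
        ∀ j : Fin r, Fin (qSetDiff k.1 j) → F) =
      ∑ k ∈ univ.filter (fun k : Fin r → Fin n => starFn k = s),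
        ∏ j, Fintype.card F ^ ((k j : ℕ) - s j) := by
  rw [Fintype.card_sigma, ← sum_subtype (univ.filter fun k : Fin r → Fin n => starFn k = s)
    (fun k => by simp [shapeFn_starFn_eq_iff hs])
    (fun k => Fintype.card (∀ j : Fin r, Fin (qSetDiff k j) → F))]
  refine sum_congr rfl fun k hk => ?_
  rw [Fintype.card_pi]
  simp only [Fintype.card_fun, Fintype.card_fin, qSetDiff, (mem_filter.mp hk).2]

end Counting

theorem stmt12_general (F : Type*) [Fintype F] (n r l : ℕ) (K : Finset (Finset (Fin r)))
    (hK : isSetPartition K) (hl : K.card = l) (hln : l ≤ n) :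
    Fintype.card (Σ k : {k : Fin r → Fin n // shapeFn (starFn k) = K},
        ∀ j : Fin r, Fin (qSetDiff k.1 j) → F) =
      ∏ j ∈ Finset.range l, qint (Fintype.card F) (n - j) := by
  classical
  obtain ⟨s, hs, rfl⟩ := hK.exists_isRestrictedGrowth_shapeFn_eq
  rw [card_shapeFn] at hl
  have hsn (j : Fin r) : s j < n := by
    have hj : s j ∈ range #(univ.image s) :=
      hs.image_univ_eq_range ▸ mem_image_of_mem s (mem_univ j)
    exact (mem_range.mp hj).trans_le (hl ▸ hln)
  rw [card_qSetPartitions_shapeFn_eq F hs, sum_filter_starFn_eq_prod _ hs hsn,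
    hs.prod_ite_eq_heightBound (fun v => qint (Fintype.card F) (n - v)), hl]

/-- the number of `n`-restricted `q`-set partitions of `{1,...,r}` whose
⋆-height sequence corresponds to a fixed set partition `K` with `l ≤ n` blocks is
`[n][n-1]···[n-l+1]`, where `q = |F|` is a prime power. -/
theorem stmt12 (F : Type*) [Field F] [Fintype F] (n r l : ℕ) (K : Finset (Finset (Fin r)))
    (hK : isSetPartition K) (hl : K.card = l) (hln : l ≤ n) :
    Fintype.card (Σ k : {k : Fin r → Fin n // shapeFn (starFn k) = K},
        ∀ j : Fin r, Fin (qSetDiff k.1 j) → F) =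
      ∏ j ∈ Finset.range l, qint (Fintype.card F) (n - j) :=
  stmt12_general F n r l K hK hl hln
end
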